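/- Conservation of total mass (function form). Let (Ω, μ) be a measure space, let φ_1, …, φ_n be real-valued functions in L²(Ω, μ), let M be the Gram matrix M_{pq} = ∫ φ_p φ_q dμ, assumed invertible, and let A be an n×n real symmetric matrix. Let k and ε be real numbers with ε ≠ 0, let c_n ∈ ℂⁿ, set c_{n+1} = exp((k/(iε)) M⁻¹ A) c_n, and define the wavefunctions ψ^n = Σ_p (c_n)_p φ_p and ψ^{n+1} = Σ_p (c_{n+1})_p φ_p. Then ∫ |ψ^{n+1}|² dμ = ∫ |ψ^n|² dμ. -/

import Mathlib

open Matrix MeasureTheory NormedSpace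

/-!
In coefficients, the mass is the Hermitian form `c ↦ cᴴ M c` of the Gram matrix `M`. The
generator `B = (k / (i ε)) M⁻¹ A` is skew-adjoint for that form (`M B = -Bᴴ M`), because `M`
and `A` are Hermitian and `k / (i ε)` is purely imaginary. Hence `exp B` intertwines `M` with
itself, `(exp B)ᴴ M (exp B) = M`, and the form is preserved.
-/

theorem star_exp_mul_mul_exp_eq_self {𝔸 : Type*} [NormedRing 𝔸] [NormedAlgebra ℚ 𝔸]
    [CompleteSpace 𝔸] [StarRing 𝔸] [ContinuousStar 𝔸] {x a : 𝔸}
    (h : SemiconjBy x a (-star a)) : star (exp a) * x * exp a = x := by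
  simpa [← star_exp] using h.exp_neg_mul_mul_exp_eq_self

theorem Matrix.conjTranspose_exp_mul_mul_exp_eq_self {m 𝔸 : Type*} [Fintype m] [DecidableEq m]
    [NormedRing 𝔸] [NormedAlgebra ℚ 𝔸] [CompleteSpace 𝔸] [StarRing 𝔸] [ContinuousStar 𝔸]
    {x a : Matrix m m 𝔸} (h : x * a = -aᴴ * x) : (exp a)ᴴ * x * exp a = x :=
  -- matrices carry no global norm; the `ℓ∞` operator norm induces the product topology
  @star_exp_mul_mul_exp_eq_self _ Matrix.linftyOpNormedRing Matrix.linftyOpNormedAlgebra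
    (inferInstanceAs (CompleteSpace (m → m → 𝔸))) _
    (inferInstanceAs (ContinuousStar (Matrix m m 𝔸))) _ _ h

theorem Matrix.mul_smul_inv_mul_eq_neg_conjTranspose_mul {m R : Type*} [Fintype m]
    [DecidableEq m] [CommRing R] [StarRing R] {M A : Matrix m m R} (hM : M.IsHermitian)
    (hA : A.IsHermitian) (hMu : IsUnit M) {α : R} (hα : star α = -α) :
    M * (α • (M⁻¹ * A)) = -(α • (M⁻¹ * A))ᴴ * M := by
  have hdet : IsUnit M.det := (isUnit_iff_isUnit_det M).mp hMu
  rw [conjTranspose_smul, conjTranspose_mul, conjTranspose_nonsing_inv, hM.eq, hA.eq, hα,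
    neg_smul, neg_neg, Matrix.mul_smul, Matrix.smul_mul, Matrix.mul_assoc, nonsing_inv_mul _ hdet,
    ← Matrix.mul_assoc, mul_nonsing_inv _ hdet, Matrix.one_mul, Matrix.mul_one]

theorem Matrix.star_mulVec_dotProduct_mulVec_mulVec {m R : Type*} [Fintype m] [CommRing R]
    [StarRing R] {E M : Matrix m m R} (h : Eᴴ * M * E = M) (c : m → R) :
    star (E *ᵥ c) ⬝ᵥ (M *ᵥ (E *ᵥ c)) = star c ⬝ᵥ (M *ᵥ c) := by
  rw [star_mulVec, mulVec_mulVec, dotProduct_mulVec, vecMul_vecMul, ← Matrix.mul_assoc, h,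
    ← dotProduct_mulVec]

noncomputable def l2GramMatrix {ι Ω : Type*} [MeasurableSpace Ω] (μ : Measure Ω)
    (φ : ι → Ω → ℝ) : Matrix ι ι ℝ :=
  of fun p q => ∫ x, φ p x * φ q x ∂μ

theorem l2GramMatrix_isSymm {ι Ω : Type*} [MeasurableSpace Ω] (μ : Measure Ω)
    (φ : ι → Ω → ℝ) : (l2GramMatrix μ φ).IsSymm :=
  IsSymm.ext fun p q => by simp only [l2GramMatrix, of_apply, mul_comm]

theorem Complex.ofReal_norm_sq_sum_mul_ofReal {ι : Type*} [Fintype ι] (c : ι → ℂ) (v : ι → ℝ) :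
    ((‖∑ p, c p * (v p : ℂ)‖ ^ 2 : ℝ) : ℂ) =
      ∑ p, ∑ q, star (c p) * c q * ((v p * v q : ℝ) : ℂ) := by
  rw [ofReal_pow, ← conj_mul', map_sum, Finset.sum_mul_sum]
  simp only [map_mul, conj_ofReal, ofReal_mul, star_def]
  exact Finset.sum_congr rfl fun p _ => Finset.sum_congr rfl fun q _ => by ring

theorem ofReal_integral_norm_sq_sum_mul_ofReal {ι Ω : Type*} [Fintype ι] [MeasurableSpace Ω]
    {μ : Measure Ω} {φ : ι → Ω → ℝ} (hφ : ∀ p, MemLp (φ p) 2 μ) (c : ι → ℂ) :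
    ((∫ x, ‖∑ p, c p * (φ p x : ℂ)‖ ^ 2 ∂μ : ℝ) : ℂ) =
      star c ⬝ᵥ ((l2GramMatrix μ φ).map Complex.ofReal *ᵥ c) := by
  have hint : ∀ p q, Integrable (fun x => ((φ p x * φ q x : ℝ) : ℂ)) μ := fun p q =>
    (memLp_one_iff_integrable.mp ((hφ q).mul (hφ p))).ofReal
  simp_rw [← integral_complex_ofReal, Complex.ofReal_norm_sq_sum_mul_ofReal]
  rw [integral_finsetSum _ fun p _ => integrable_finsetSum _ fun q _ => (hint p q).const_mul _]
  simp_rw [integral_finsetSum _ fun q _ => (hint _ q).const_mul _, integral_const_mul,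
    integral_complex_ofReal]
  simp only [dotProduct, mulVec, Finset.mul_sum, Pi.star_apply, map_apply, l2GramMatrix, of_apply]
  exact Finset.sum_congr rfl fun p _ => Finset.sum_congr rfl fun q _ => by ring

theorem mass_conservation_function_form_general {Ω : Type*} [MeasurableSpace Ω] (μ : Measure Ω)
    {n : ℕ} (φ : Fin n → Ω → ℝ) (hφ : ∀ p, MemLp (φ p) 2 μ)
    (M : Matrix (Fin n) (Fin n) ℝ)
    (hM : ∀ p q : Fin n, M p q = ∫ x, φ p x * φ q x ∂μ)
    (hMinv : IsUnit M)
    (A : Matrix (Fin n) (Fin n) ℝ) (hAsymm : A.IsSymm)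
    (k ε : ℝ) (c c' : Fin n → ℂ)
    (hstep : c' = (NormedSpace.exp (((k : ℂ) / (Complex.I * (ε : ℂ))) •
        ((M.map (Complex.ofReal))⁻¹ * A.map (Complex.ofReal)))) *ᵥ c)
    (ψ ψ' : Ω → ℂ)
    (hψ : ∀ x, ψ x = ∑ p, c p * (φ p x : ℂ))
    (hψ' : ∀ x, ψ' x = ∑ p, c' p * (φ p x : ℂ)) :
    ∫ x, ‖ψ' x‖ ^ 2 ∂μ = ∫ x, ‖ψ x‖ ^ 2 ∂μ := by
  obtain rfl : M = l2GramMatrix μ φ := Matrix.ext hM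
  obtain rfl : ψ = _ := funext hψ
  obtain rfl : ψ' = _ := funext hψ'
  have hMc : ((l2GramMatrix μ φ).map Complex.ofReal).IsHermitian :=
    (isHermitian_iff_isSymm.mpr (l2GramMatrix_isSymm μ φ)).map _ fun _ => by simp
  have hAc : (A.map Complex.ofReal).IsHermitian :=
    (isHermitian_iff_isSymm.mpr hAsymm).map _ fun _ => by simp
  have hMcu : IsUnit ((l2GramMatrix μ φ).map Complex.ofReal) :=
    hMinv.map Complex.ofRealHom.mapMatrix
  have hα : star ((k : ℂ) / (Complex.I * ε)) = -((k : ℂ) / (Complex.I * ε)) := by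
    simp [div_neg]
  have hE := conjTranspose_exp_mul_mul_exp_eq_self
    (mul_smul_inv_mul_eq_neg_conjTranspose_mul hMc hAc hMcu hα)
  apply Complex.ofReal_injective
  rw [ofReal_integral_norm_sq_sum_mul_ofReal hφ, ofReal_integral_norm_sq_sum_mul_ofReal hφ,
    hstep, star_mulVec_dotProduct_mulVec_mulVec hE]

/-- **Conservation of total mass (function form).** Let `(Ω, μ)` be a measure
space, `φ₁, …, φₙ` real-valued in `L²(Ω, μ)`, `M` the (invertible) Gram matrix
`M p q = ∫ φ_p φ_q dμ`, `A` an `n × n` real symmetric matrix, `k, ε` real with `ε ≠ 0`,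
`cₙ ∈ ℂⁿ`, and `cₙ₊₁ = exp ((k/(iε)) M⁻¹ A) cₙ`. With `ψⁿ = Σ (cₙ)_p φ_p` and
`ψⁿ⁺¹ = Σ (cₙ₊₁)_p φ_p`, one has `∫ |ψⁿ⁺¹|² dμ = ∫ |ψⁿ|² dμ`. -/
theorem mass_conservation_function_form {Ω : Type*} [MeasurableSpace Ω] (μ : Measure Ω)
    {n : ℕ} (φ : Fin n → Ω → ℝ) (hφ : ∀ p, MemLp (φ p) 2 μ)
    (M : Matrix (Fin n) (Fin n) ℝ)
    (hM : ∀ p q : Fin n, M p q = ∫ x, φ p x * φ q x ∂μ)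
    (hMinv : IsUnit M)
    (A : Matrix (Fin n) (Fin n) ℝ) (hAsymm : A.IsSymm)
    (k ε : ℝ) (hε : ε ≠ 0) (c c' : Fin n → ℂ)
    (hstep : c' = (NormedSpace.exp (((k : ℂ) / (Complex.I * (ε : ℂ))) •
        ((M.map (Complex.ofReal))⁻¹ * A.map (Complex.ofReal)))) *ᵥ c)
    (ψ ψ' : Ω → ℂ)
    (hψ : ∀ x, ψ x = ∑ p, c p * (φ p x : ℂ))
    (hψ' : ∀ x, ψ' x = ∑ p, c' p * (φ p x : ℂ)) :
    ∫ x, ‖ψ' x‖ ^ 2 ∂μ = ∫ x, ‖ψ x‖ ^ 2 ∂μ :=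
  mass_conservation_function_form_general μ φ hφ M hM hMinv A hAsymm k ε c c' hstep ψ ψ' hψ hψ'
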